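/- arXiv:1005.1114 — 4 statements merged into one kernel-verified Lean document; each statement's English description precedes it below -/
import Mathlib

section
/- For any subfield F of ℝ and any subset X ⊆ Fⁿ, the F-convex hull of X equals the intersection of the real convex hull of X with Fⁿ: conv_F(X) = conv_ℝ(X) ∩ Fⁿ. -/
open scoped BigOperators

noncomputable section

variable {n : ℕ}

/-- The `F`-convex hull of a set `X ⊆ ℝⁿ`. -/
def convF (F : Subfield ℝ) (X : Set (EuclideanSpace ℝ (Fin n))) :
    Set (EuclideanSpace ℝ (Fin n)) :=
  { u | ∃ (k : ℕ) (r : Fin k → ℝ) (x : Fin k → EuclideanSpace ℝ (Fin n)),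
      (∀ j, r j ∈ F) ∧ (∀ j, 0 ≤ r j) ∧ (∀ j, x j ∈ X) ∧
      (∑ j, r j) = 1 ∧ (∑ j, r j • x j) = u }

set_option synthInstance.maxHeartbeats 1000000
set_option maxHeartbeats 1000000

/-- Evaluation of a finite sum of scaled vectors in Euclidean space. -/
lemma sum_smul_apply {k : ℕ} (r : Fin k → ℝ) (x : Fin k → EuclideanSpace ℝ (Fin n)) (i : Fin n) :
    (∑ j, r j • x j) i = ∑ j, r j * x j i := by
  have h : (∑ j, r j • x j) i = PiLp.projₗ (𝕜 := ℝ) 2 (fun _ : Fin n => ℝ) i (∑ j, r j • x j) :=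
    rfl
  rw [h, map_sum]
  simp [PiLp.projₗ]

/-- An injective matrix with entries in a subfield has a left inverse with entries
in the subfield. -/
lemma exists_leftInv_of_subfield {m k : Type} [Fintype m] [Fintype k] [DecidableEq m]
    [DecidableEq k] (F : Subfield ℝ) (M : Matrix m k ℝ) (hM : ∀ i j, M i j ∈ F)
    (hinj : Function.Injective M.mulVec) :
    ∃ N : Matrix k m ℝ, (∀ i j, N i j ∈ F) ∧ N * M = 1 := by
  set M' : Matrix m k F := fun i j => ⟨M i j, hM i j⟩ with hM'
  have hmv : ∀ x : k → F, M.mulVec (fun j => (x j : ℝ)) = fun i => ((M'.mulVec x i : F) : ℝ) := by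
    intro x
    funext i
    simp only [Matrix.mulVec, dotProduct, hM']
    push_cast
    rfl
  have hker : LinearMap.ker (Matrix.toLin' M') = ⊥ := by
    rw [LinearMap.ker_eq_bot]
    intro x y hxy
    have h1 : M.mulVec (fun j => (x j : ℝ)) = M.mulVec (fun j => (y j : ℝ)) := by
      rw [hmv, hmv]
      have hxy' : M'.mulVec x = M'.mulVec y := by
        simpa [Matrix.toLin'_apply] using hxy
      rw [hxy']
    have h2 := hinj h1
    funext j
    exact Subtype.ext (congrFun h2 j)
  obtain ⟨g, hg⟩ := (Matrix.toLin' M').exists_leftInverse_of_injective hker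
  refine ⟨(LinearMap.toMatrix' g).map F.subtype, fun i j => ((LinearMap.toMatrix' g) i j).2, ?_⟩
  have h3 : LinearMap.toMatrix' g * M' = 1 := by
    have h4 := LinearMap.toMatrix'_comp g (Matrix.toLin' M')
    rw [hg, LinearMap.toMatrix'_toLin'] at h4
    rw [← h4, LinearMap.toMatrix'_id]
  have hMmap : M'.map F.subtype = M := rfl
  calc (LinearMap.toMatrix' g).map F.subtype * M
      = (LinearMap.toMatrix' g).map F.subtype * M'.map F.subtype := by rw [hMmap]
    _ = (LinearMap.toMatrix' g * M').map F.subtype := (Matrix.map_mul).symm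
    _ = (1 : Matrix k k F).map F.subtype := by rw [h3]
    _ = 1 := by
        ext i j
        by_cases h : i = j <;> simp [Matrix.one_apply, h]

theorem convF_eq_convexHull_inter (F : Subfield ℝ)
    (X : Set (EuclideanSpace ℝ (Fin n)))
    (hX : ∀ x ∈ X, ∀ i, x i ∈ F) :
    convF F X = convexHull ℝ X ∩ {v : EuclideanSpace ℝ (Fin n) | ∀ i, v i ∈ F} := by
  ext u
  constructor
  · rintro ⟨k, r, x, hrF, hr0, hxX, hsum, rfl⟩
    refine ⟨?_, fun i => ?_⟩
    · have h := Finset.univ.centerMass_mem_convexHull (w := r) (z := x)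
        (fun j _ => hr0 j) (by rw [hsum]; exact one_pos) (fun j _ => hxX j)
      rwa [Finset.centerMass_eq_of_sum_1 _ _ hsum] at h
    · rw [sum_smul_apply]
      exact sum_mem fun j _ => mul_mem (hrF j) (hX _ (hxX j) i)
  · rintro ⟨hu, huF⟩
    obtain ⟨ι, hι, z, w, hzX, hai, hw, hw1, hwz⟩ := eq_pos_convex_span_of_mem_convexHull hu
    -- reindex by `Fin k`
    set k := Fintype.card ι with hk
    set e : Fin k → ι := ⇑(Fintype.equivFin ι).symm with he
    set x : Fin k → EuclideanSpace ℝ (Fin n) := z ∘ e with hx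
    set r : Fin k → ℝ := w ∘ e with hr
    have hxX : ∀ j, x j ∈ X := fun j => hzX ⟨e j, rfl⟩
    have hr0 : ∀ j, 0 ≤ r j := fun j => (hw (e j)).le
    have hsum : (∑ j, r j) = 1 := by
      rw [hr]
      rw [← hw1]
      exact Fintype.sum_equiv (Fintype.equivFin ι).symm _ _ fun j => rfl
    have hsmul : (∑ j, r j • x j) = u := by
      rw [← hwz]
      exact Fintype.sum_equiv (Fintype.equivFin ι).symm _ _ fun j => rfl
    have hai' : AffineIndependent ℝ x :=
      (affineIndependent_equiv (Fintype.equivFin ι).symm).2 hai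
    -- the matrix of the linear system
    set M : Matrix (Sum (Fin n) Unit) (Fin k) ℝ :=
      fun i j => Sum.elim (fun i => x j i) (fun _ => 1) i with hM
    have hMF : ∀ i j, M i j ∈ F := by
      rintro (i | i) j
      · exact hX _ (hxX j) i
      · exact one_mem F
    have hMinj : Function.Injective M.mulVec := by
      have hlin : M.mulVec = Matrix.toLin' M := by
        funext v; rw [Matrix.toLin'_apply]
      rw [hlin]
      rw [← LinearMap.ker_eq_bot, LinearMap.ker_eq_bot']
      intro c hc
      have hc' : M.mulVec c = 0 := by rw [hlin]; exact hc
      have hzero : (∑ j, c j) = 0 := by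
        have := congrFun hc' (Sum.inr ())
        simpa [Matrix.mulVec, dotProduct, hM] using this
      have hvec : (∑ j, c j • x j) = 0 := by
        ext i
        show (∑ j, c j • x j) i = (0 : Fin n → ℝ) i
        rw [sum_smul_apply]
        have h5 := congrFun hc' (Sum.inl i)
        simpa [Matrix.mulVec, dotProduct, hM, mul_comm] using h5
      have := affineIndependent_iff.1 hai' Finset.univ c (by simpa using hzero)
        (by simpa using hvec)
      funext j
      exact this j (Finset.mem_univ j)
    obtain ⟨N, hNF, hNM⟩ := exists_leftInv_of_subfield F M hMF hMinj
    -- the right-hand side of the system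
    set b : Sum (Fin n) Unit → ℝ := Sum.elim (fun i => u i) (fun _ => 1) with hb
    have hMr : M.mulVec r = b := by
      funext i
      rcases i with i | i
      · have := sum_smul_apply r x i
        rw [hsmul] at this
        simpa [Matrix.mulVec, dotProduct, hM, hb, mul_comm] using this.symm
      · simpa [Matrix.mulVec, dotProduct, hM, hb] using hsum
    have hrN : r = N.mulVec b := by
      rw [← hMr, Matrix.mulVec_mulVec, hNM, Matrix.one_mulVec]
    have hrF : ∀ j, r j ∈ F := by
      intro j
      rw [hrN]
      show ∑ i, N j i * b i ∈ F
      refine sum_mem fun i _ => mul_mem (hNF j i) ?_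
      rcases i with i | i
      · exact huF i
      · exact one_mem F
    exact ⟨k, r, x, hrF, hr0, hxX, hsum, hsmul⟩
end
end

section
/- If X ⊆ Fⁿ for a subfield F of ℝ and F₀ is a face of conv_ℝ(X), then F₀ ∩ Fⁿ is a face of conv_F(X), in the sense that it is the intersection of conv_F(X) with a supporting hyperplane (or all of conv_F(X)). -/
open scoped BigOperators RealInnerProductSpace

noncomputable section

variable {n : ℕ}

/-- `Fc` is a face of `P`: `Fc = P` or `Fc` is the intersection of `P` with a
supporting hyperplane. -/
def IsFaceOf (P Fc : Set (EuclideanSpace ℝ (Fin n))) : Prop :=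
  Fc = P ∨ ∃ v w : EuclideanSpace ℝ (Fin n),
    (∀ u ∈ P, 0 ≤ ⟪v, u - w⟫) ∧
    (P ∩ {u | ⟪v, u - w⟫ = 0}).Nonempty ∧
    Fc = P ∩ {u | ⟪v, u - w⟫ = 0}

/-- Coordinatewise evaluation of a sum of scalar multiples. -/
lemma sum_smul_apply_s3 {α : Type*} (t : Finset α) (f : α → ℝ)
    (g : α → EuclideanSpace ℝ (Fin n)) (i : Fin n) :
    (∑ y ∈ t, f y • g y) i = ∑ y ∈ t, f y * g y i := by
  have h := map_sum (EuclideanSpace.proj (𝕜 := ℝ) i) (fun y => f y • g y) t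
  simp only [map_smul, PiLp.proj_apply, smul_eq_mul] at h
  exact h

/-- There is an `F`-linear projection of `ℝ` onto `F` fixing `F`. -/
lemma exists_proj (F : Subfield ℝ) :
    ∃ π : ℝ →ₗ[↥F] ℝ, (∀ x, π x ∈ F) ∧ (∀ x ∈ F, π x = x) := by
  let S : Submodule ↥F ℝ :=
    { carrier := F
      add_mem' := fun ha hb => F.add_mem ha hb
      zero_mem' := F.zero_mem
      smul_mem' := fun c x hx => F.mul_mem c.2 hx }
  obtain ⟨q, hq⟩ := Submodule.exists_isCompl S
  refine ⟨S.subtype ∘ₗ Submodule.linearProjOfIsCompl S q hq, fun x => ?_, fun x hx => ?_⟩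
  · exact (Submodule.linearProjOfIsCompl S q hq x).2
  · have := Submodule.linearProjOfIsCompl_apply_left hq ⟨x, hx⟩
    exact congrArg Subtype.val this

/-- An `F`-rational point of the real convex hull of `X ⊆ Fⁿ` is an `F`-convex
combination of points of `X`. -/
lemma mem_convF_of_mem_hull (F : Subfield ℝ) (X : Set (EuclideanSpace ℝ (Fin n)))
    (hX : ∀ x ∈ X, ∀ i, x i ∈ F) {u : EuclideanSpace ℝ (Fin n)}
    (hu : u ∈ convexHull ℝ X) (huF : ∀ i, u i ∈ F) : u ∈ convF F X := by
  obtain ⟨π, hπF, hπid⟩ := exists_proj F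
  have hπmul : ∀ c ∈ F, ∀ r : ℝ, π (c * r) = c * π r := by
    intro c hc r
    have : (⟨c, hc⟩ : ↥F) • r = c * r := rfl
    rw [← this, map_smul]; rfl
  rw [convexHull_eq_union] at hu
  simp only [Set.mem_iUnion] at hu
  obtain ⟨t, hts, hai, hut⟩ := hu
  rw [Finset.convexHull_eq] at hut
  obtain ⟨w, hw0, hw1, hwc⟩ := hut
  rw [Finset.centerMass_eq_of_sum_1 _ _ hw1] at hwc
  simp only [id] at hwc
  have htF : ∀ y ∈ t, ∀ i, y i ∈ F := fun y hy => hX y (hts hy)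
  -- the projected weights give the same convex combination
  have h1 : ∑ y ∈ t, π (w y) = 1 := by
    rw [← map_sum]; rw [hw1]; exact hπid 1 F.one_mem
  have h2 : ∑ y ∈ t, π (w y) • y = u := by
    ext i
    rw [sum_smul_apply_s3]
    have : ∀ y ∈ t, π (w y) * y i = π (w y * y i) := by
      intro y hy
      rw [mul_comm (w y) (y i), hπmul (y i) (htF y hy i), mul_comm]
    rw [Finset.sum_congr rfl this, ← map_sum, ← sum_smul_apply_s3 t w (fun y => y) i]
    have : (∑ y ∈ t, w y • y) i = u i := by rw [hwc]
    rw [this]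
    exact hπid (u i) (huF i)
  -- affine independence forces the weights to agree
  have key : ∀ y ∈ t, w y = π (w y) := by
    have hai' := affineIndependent_iff.mp hai Finset.univ
      (fun y : ↥t => w ↑y - π (w ↑y)) ?_ ?_
    · intro y hy
      have := hai' ⟨y, hy⟩ (Finset.mem_univ _)
      linarith [this]
    · have hat : ∑ y : ↥t, (w ↑y - π (w ↑y)) = ∑ y ∈ t, (w y - π (w y)) :=
        Finset.sum_attach t (fun y => w y - π (w y))
      rw [hat, Finset.sum_sub_distrib, hw1, h1, sub_self]
    · have : ∑ y : ↥t, (w ↑y - π (w ↑y)) • (y : EuclideanSpace ℝ (Fin n)) =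
          ∑ y ∈ t, (w y - π (w y)) • y :=
        Finset.sum_attach t (fun y => (w y - π (w y)) • y)
      rw [this]
      have : ∀ y ∈ t, (w y - π (w y)) • y = w y • y - π (w y) • y := fun y _ => sub_smul _ _ _
      rw [Finset.sum_congr rfl this, Finset.sum_sub_distrib, hwc, h2, sub_self]
  -- reindex by `Fin t.card`
  refine ⟨t.card, fun j => w (t.equivFin.symm j), fun j => (t.equivFin.symm j : _),
    fun j => ?_, fun j => hw0 _ (t.equivFin.symm j).2, fun j => hts (t.equivFin.symm j).2,
    ?_, ?_⟩
  · show w ↑(t.equivFin.symm j) ∈ F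
    rw [key _ (t.equivFin.symm j).2]; exact hπF _
  · rw [Fintype.sum_equiv t.equivFin.symm (fun j => w (t.equivFin.symm j)) (fun y => w ↑y)
      (fun j => rfl)]
    rw [Finset.sum_coe_sort t (fun y => w y)]; exact hw1
  · rw [Fintype.sum_equiv t.equivFin.symm (fun j => w (t.equivFin.symm j) • (t.equivFin.symm j : EuclideanSpace ℝ (Fin n)))
      (fun y : ↥t => w ↑y • (y : EuclideanSpace ℝ (Fin n))) (fun j => rfl)]
    rw [Finset.sum_coe_sort t (fun y => w y • y)]; exact hwc

lemma convF_subset_hull (F : Subfield ℝ) (X : Set (EuclideanSpace ℝ (Fin n))) :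
    convF F X ⊆ convexHull ℝ X := by
  rintro u ⟨k, r, x, hrF, hr0, hxX, hsum, heq⟩
  have : Finset.univ.centerMass r x ∈ convexHull ℝ X := by
    apply Finset.centerMass_mem_convexHull
    · exact fun j _ => hr0 j
    · rw [hsum]; norm_num
    · exact fun j _ => hxX j
  rwa [Finset.centerMass_eq_of_sum_1 _ _ hsum, heq] at this

lemma convF_subset_ratl (F : Subfield ℝ) (X : Set (EuclideanSpace ℝ (Fin n)))
    (hX : ∀ x ∈ X, ∀ i, x i ∈ F) :
    convF F X ⊆ {v : EuclideanSpace ℝ (Fin n) | ∀ i, v i ∈ F} := by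
  rintro u ⟨k, r, x, hrF, hr0, hxX, hsum, heq⟩ i
  rw [← heq, sum_smul_apply_s3]
  exact F.sum_mem fun j _ => F.mul_mem (hrF j) (hX (x j) (hxX j) i)

lemma subset_convF (F : Subfield ℝ) (X : Set (EuclideanSpace ℝ (Fin n))) :
    X ⊆ convF F X := by
  intro u hu
  exact ⟨1, fun _ => 1, fun _ => u, fun _ => F.one_mem, fun _ => zero_le_one,
    fun _ => hu, by simp, by simp⟩

theorem face_inter_is_face_convF (F : Subfield ℝ)
    (X : Set (EuclideanSpace ℝ (Fin n)))
    (hX : ∀ x ∈ X, ∀ i, x i ∈ F)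
    (F₀ : Set (EuclideanSpace ℝ (Fin n)))
    (hF₀ : IsFaceOf (convexHull ℝ X) F₀) :
    IsFaceOf (convF F X) (F₀ ∩ {v : EuclideanSpace ℝ (Fin n) | ∀ i, v i ∈ F}) := by
  rcases hF₀ with rfl | ⟨v, w, hsupp, ⟨p, hpc, hpH⟩, hFeq⟩
  · left
    apply Set.Subset.antisymm
    · rintro u ⟨hu1, hu2⟩
      exact mem_convF_of_mem_hull F X hX hu1 hu2
    · intro u hu
      exact ⟨convF_subset_hull F X hu, convF_subset_ratl F X hX hu⟩
  · right
    refine ⟨v, w, fun u hu => hsupp u (convF_subset_hull F X hu), ?_, ?_⟩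
    · -- find a point of X on the hyperplane
      rw [convexHull_eq] at hpc
      obtain ⟨ι, t, r, z, hr0, hr1, hzX, hc⟩ := hpc
      rw [Finset.centerMass_eq_of_sum_1 _ _ hr1] at hc
      have hterm : ∀ j ∈ t, 0 ≤ r j * ⟪v, z j - w⟫ := fun j hj =>
        mul_nonneg (hr0 j hj) (hsupp _ (subset_convexHull ℝ X (hzX j hj)))
      have hsum0 : ∑ j ∈ t, r j * ⟪v, z j - w⟫ = 0 := by
        have : ∑ j ∈ t, r j • (z j - w) = p - w := by
          rw [Finset.sum_congr rfl (fun j _ => smul_sub (r j) (z j) w),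
            Finset.sum_sub_distrib, ← Finset.sum_smul, hr1, one_smul, hc]
        calc ∑ j ∈ t, r j * ⟪v, z j - w⟫
            = ⟪v, ∑ j ∈ t, r j • (z j - w)⟫ := by
              rw [inner_sum]
              exact Finset.sum_congr rfl fun j _ => (real_inner_smul_right v _ (r j)).symm
          _ = 0 := by rw [this]; exact hpH
      have hall : ∀ j ∈ t, r j * ⟪v, z j - w⟫ = 0 :=
        (Finset.sum_eq_zero_iff_of_nonneg hterm).mp hsum0
      obtain ⟨j, hjt, hj0⟩ : ∃ j ∈ t, r j ≠ 0 := by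
        by_contra h
        push_neg at h
        rw [Finset.sum_eq_zero (fun j hj => h j hj)] at hr1
        norm_num at hr1
      refine ⟨z j, subset_convF F X (hzX j hjt), ?_⟩
      have := hall j hjt
      rcases mul_eq_zero.mp this with h | h
      · exact absurd h hj0
      · exact h
    · rw [hFeq]
      ext u
      constructor
      · rintro ⟨⟨hu1, hu2⟩, hu3⟩
        exact ⟨mem_convF_of_mem_hull F X hX hu1 hu3, hu2⟩
      · rintro ⟨hu1, hu2⟩
        exact ⟨⟨convF_subset_hull F X hu1, hu2⟩, convF_subset_ratl F X hX hu1⟩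
end
end

section
/- For any X ⊆ ℝⁿ and subfield F ⊆ ℝ, a subset Y ⊆ X is a weak F-face of X if and only if the following holds: whenever Σ_{y∈Y} m_y·y = Σ_{x∈X} r_x·x with all m_y, r_x ∈ F, m_y, r_x ≥ 0 (finitely many nonzero) and Σ m_y = Σ r_x > 0, then every x ∈ X with r_x ≠ 0 lies in Y. -/
open scoped BigOperators Classical

noncomputable section

variable {n : ℕ}

/-- The `F`-relative interior of `conv_F(X)`. -/
def relintF (F : Subfield ℝ) (X : Set (EuclideanSpace ℝ (Fin n))) :
    Set (EuclideanSpace ℝ (Fin n)) :=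
  { u | u ∈ convF F X ∧ ∀ y ∈ convF F X, ∃ z ∈ convF F X, ∃ t : ℝ,
      t ∈ F ∧ 0 < t ∧ t < 1 ∧ u = t • y + (1 - t) • z }

/-- `Y` is a weak `F`-face of `X`. -/
def IsWeakFFace (F : Subfield ℝ) (X Y : Set (EuclideanSpace ℝ (Fin n))) : Prop :=
  Y ⊆ X ∧ ∀ U ⊆ X, (convF F Y ∩ relintF F U).Nonempty → U ⊆ Y

/-! ### Auxiliary lemmas -/

lemma fs_mass (g : EuclideanSpace ℝ (Fin n) →₀ ℝ) :
    (g.sum fun _ c => c) = ∑ a ∈ g.support, g a := rfl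

lemma fs_combo (g : EuclideanSpace ℝ (Fin n) →₀ ℝ) :
    (g.sum fun a c => c • a) = ∑ a ∈ g.support, g a • a := rfl

lemma mem_convF_finset (F : Subfield ℝ) (S : Set (EuclideanSpace ℝ (Fin n)))
    (s : Finset (EuclideanSpace ℝ (Fin n))) (g : EuclideanSpace ℝ (Fin n) → ℝ)
    (hF : ∀ x ∈ s, g x ∈ F) (h0 : ∀ x ∈ s, 0 ≤ g x) (hS : ∀ x ∈ s, x ∈ S)
    (h1 : ∑ x ∈ s, g x = 1) :
    (∑ x ∈ s, g x • x) ∈ convF F S := by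
  classical
  refine ⟨s.card, fun j => g (s.equivFin.symm j),
    fun j => (s.equivFin.symm j : EuclideanSpace ℝ (Fin n)),
    fun j => hF _ (s.equivFin.symm j).2, fun j => h0 _ (s.equivFin.symm j).2,
    fun j => hS _ (s.equivFin.symm j).2, ?_, ?_⟩
  · rw [Equiv.sum_comp s.equivFin.symm (fun a : s => g a)]
    rw [Finset.sum_coe_sort s g]; exact h1
  · rw [Equiv.sum_comp s.equivFin.symm
      (fun a : s => g (a : EuclideanSpace ℝ (Fin n)) • (a : EuclideanSpace ℝ (Fin n)))]
    rw [Finset.sum_coe_sort s (fun a => g a • a)]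

section agg
variable {k : ℕ} (c : Fin k → ℝ) (p : Fin k → EuclideanSpace ℝ (Fin n))

lemma agg_apply (a : EuclideanSpace ℝ (Fin n)) :
    (∑ j, Finsupp.single (p j) (c j)) a = ∑ j, if p j = a then c j else 0 := by
  rw [Finsupp.finset_sum_apply]
  simp [Finsupp.single_apply]

lemma agg_sum_linear {M : Type*} [AddCommMonoid M] [Module ℝ M]
    (v : EuclideanSpace ℝ (Fin n) → M) :
    (∑ j, Finsupp.single (p j) (c j)).sum (fun a t => t • v a) = ∑ j, c j • v (p j) := by
  rw [← Finsupp.linearCombination_apply, map_sum]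
  simp [Finsupp.linearCombination_single]

lemma agg_total :
    (∑ j, Finsupp.single (p j) (c j)).sum (fun _ t => t) = ∑ j, c j := by
  simpa using agg_sum_linear c p (fun _ => (1 : ℝ))

lemma agg_combo :
    (∑ j, Finsupp.single (p j) (c j)).sum (fun a t => t • a) = ∑ j, c j • p j := by
  simpa using agg_sum_linear c p id

lemma agg_mem (F : Subfield ℝ) (hc : ∀ j, c j ∈ F) (a : EuclideanSpace ℝ (Fin n)) :
    (∑ j, Finsupp.single (p j) (c j)) a ∈ F := by
  rw [agg_apply]
  exact Subfield.sum_mem F fun j _ => by split <;> simp [hc j, Subfield.zero_mem]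

lemma agg_nonneg (hc : ∀ j, 0 ≤ c j) (a : EuclideanSpace ℝ (Fin n)) :
    0 ≤ (∑ j, Finsupp.single (p j) (c j)) a := by
  rw [agg_apply]
  exact Finset.sum_nonneg fun j _ => by split <;> simp [hc j]

lemma agg_le (hc : ∀ j, 0 ≤ c j) (a : EuclideanSpace ℝ (Fin n)) :
    (∑ j, Finsupp.single (p j) (c j)) a ≤ ∑ j, c j := by
  rw [agg_apply]
  exact Finset.sum_le_sum fun j _ => by split <;> simp [hc j]

lemma agg_support (a : EuclideanSpace ℝ (Fin n))
    (h : (∑ j, Finsupp.single (p j) (c j)) a ≠ 0) :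
    ∃ j, p j = a := by
  by_contra hcon
  push_neg at hcon
  rw [agg_apply] at h
  exact h (Finset.sum_eq_zero fun j _ => by simp [hcon j])

end agg

theorem weakFFace_iff_sum_condition (F : Subfield ℝ)
    (X Y : Set (EuclideanSpace ℝ (Fin n))) (hYX : Y ⊆ X) :
    IsWeakFFace F X Y ↔
      ∀ m r : EuclideanSpace ℝ (Fin n) →₀ ℝ,
        (∀ y, m y ∈ F) → (∀ y, 0 ≤ m y) → (∀ x, r x ∈ F) → (∀ x, 0 ≤ r x) →
        (↑m.support ⊆ Y) → (↑r.support ⊆ X) →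
        (m.sum fun y c => c • y) = (r.sum fun x c => c • x) →
        (m.sum fun _ c => c) = (r.sum fun _ c => c) →
        0 < (m.sum fun _ c => c) →
        ∀ x, r x ≠ 0 → x ∈ Y := by
  classical
  constructor
  · rintro ⟨-, hface⟩ m r hmF hm0 hrF hr0 hmY hrX hcombo hmass hpos x hx
    set s : ℝ := r.sum fun _ c => c with hs_def
    have hs : 0 < s := hmass ▸ hpos
    have hsF : s ∈ F := by
      rw [hs_def, fs_mass]
      exact Subfield.sum_mem F fun a _ => hrF a
    set u : EuclideanSpace ℝ (Fin n) := s⁻¹ • (r.sum fun a c => c • a) with hu_def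
    have key : ∀ g : EuclideanSpace ℝ (Fin n) →₀ ℝ,
        ∑ a ∈ g.support, (g a / s) • a = s⁻¹ • (g.sum fun a c => c • a) := by
      intro g
      rw [fs_combo, Finset.smul_sum]
      exact Finset.sum_congr rfl fun a _ => by rw [div_eq_inv_mul, mul_smul]
    have hmtot : ∑ a ∈ m.support, m a / s = 1 := by
      rw [← Finset.sum_div, ← fs_mass, hmass, div_self hs.ne']
    have hrtot : ∑ a ∈ r.support, r a / s = 1 := by
      rw [← Finset.sum_div, ← fs_mass, ← hs_def, div_self hs.ne']
    have hum : ∑ a ∈ m.support, (m a / s) • a = u := by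
      rw [key m, hcombo]
    have hur : ∑ a ∈ r.support, (r a / s) • a = u := by
      rw [key r]
    have huY : u ∈ convF F Y := by
      rw [← hum]
      exact mem_convF_finset F Y m.support _
        (fun a _ => div_mem (hmF a) hsF) (fun a _ => div_nonneg (hm0 a) hs.le)
        (fun a ha => hmY (Finset.mem_coe.2 ha)) hmtot
    have huU : u ∈ convF F (↑r.support : Set (EuclideanSpace ℝ (Fin n))) := by
      rw [← hur]
      exact mem_convF_finset F _ r.support _
        (fun a _ => div_mem (hrF a) hsF) (fun a _ => div_nonneg (hr0 a) hs.le)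
        (fun a ha => Finset.mem_coe.2 ha) hrtot
    have hsupne : r.support.Nonempty := ⟨x, Finsupp.mem_support_iff.2 hx⟩
    have himg : (r.support.image fun a => r a / s).Nonempty := hsupne.image _
    set c0 : ℝ := (r.support.image fun a => r a / s).min' himg with hc0_def
    obtain ⟨x₁, hx₁, hc0eq⟩ :=
      Finset.mem_image.1 ((r.support.image fun a => r a / s).min'_mem himg)
    have hc0F : c0 ∈ F := by
      rw [hc0_def, ← hc0eq]; exact div_mem (hrF x₁) hsF
    have hc0pos : 0 < c0 := by
      rw [hc0_def, ← hc0eq]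
      exact div_pos (lt_of_le_of_ne (hr0 x₁) (Ne.symm (Finsupp.mem_support_iff.1 hx₁))) hs
    have hc0le : ∀ a ∈ r.support, c0 ≤ r a / s := fun a ha =>
      Finset.min'_le _ _ (Finset.mem_image_of_mem _ ha)
    have hrx1les : r x₁ ≤ s := by
      rw [hs_def, fs_mass]
      exact Finset.single_le_sum (fun a _ => hr0 a) hx₁
    have hc0le1 : c0 ≤ 1 := (hc0le x₁ hx₁).trans ((div_le_one hs).2 hrx1les)
    have h2F : (2 : ℝ) ∈ F := by
      rw [show (2 : ℝ) = 1 + 1 by norm_num]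
      exact add_mem F.one_mem F.one_mem
    set t : ℝ := c0 / 2 with ht_def
    have htF : t ∈ F := div_mem hc0F h2F
    have ht0 : 0 < t := half_pos hc0pos
    have ht1 : t < 1 := by rw [ht_def]; linarith
    have h1t : (0:ℝ) < 1 - t := by linarith
    have hrel : u ∈ relintF F (↑r.support : Set (EuclideanSpace ℝ (Fin n))) := by
      refine ⟨huU, fun y hy => ?_⟩
      obtain ⟨k, c, p, hcF, hc0', hpU, hcsum, hcy⟩ := hy
      set w := ∑ j, Finsupp.single (p j) (c j) with hw_def
      have hwle : ∀ a, w a ≤ 1 := fun a => by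
        rw [hw_def]
        have := agg_le c p hc0' a
        rwa [hcsum] at this
      have hwsupp : w.support ⊆ r.support := by
        intro a ha
        rw [hw_def] at ha
        obtain ⟨j, rfl⟩ := agg_support c p a (Finsupp.mem_support_iff.1 ha)
        exact Finset.mem_coe.1 (hpU j)
      have hwtotal : ∑ a ∈ r.support, w a = 1 := by
        rw [← Finset.sum_subset hwsupp (fun a _ ha => Finsupp.notMem_support_iff.1 ha),
          ← fs_mass, hw_def, agg_total]
        exact hcsum
      have hy_eq : y = ∑ a ∈ r.support, w a • a := by
        rw [← hcy, ← agg_combo c p, ← hw_def, fs_combo]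
        exact Finset.sum_subset hwsupp
          (fun a _ ha => by rw [Finsupp.notMem_support_iff.1 ha, zero_smul])
      have htle : ∀ a ∈ r.support, t * w a ≤ r a / s := by
        intro a ha
        have h1 : t * w a ≤ t * 1 :=
          mul_le_mul_of_nonneg_left (hwle a) ht0.le
        have h2 : t ≤ c0 := by rw [ht_def]; linarith
        calc t * w a ≤ t := by linarith
          _ ≤ c0 := h2
          _ ≤ r a / s := hc0le a ha
      refine ⟨∑ a ∈ r.support, ((r a / s - t * w a) / (1 - t)) • a, ?_, t, htF, ht0, ht1, ?_⟩
      · refine mem_convF_finset F _ r.support _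
          (fun a _ => div_mem
            (sub_mem (div_mem (hrF a) hsF)
              (mul_mem htF (by rw [hw_def]; exact agg_mem c p F hcF a)))
            (sub_mem F.one_mem htF))
          (fun a ha => div_nonneg (sub_nonneg.2 (htle a ha)) h1t.le)
          (fun a ha => Finset.mem_coe.2 ha) ?_
        rw [← Finset.sum_div, Finset.sum_sub_distrib, ← Finset.mul_sum, hwtotal, hrtot,
          mul_one, div_self h1t.ne']
      · rw [hy_eq, ← hur, Finset.smul_sum, Finset.smul_sum, ← Finset.sum_add_distrib]
        refine Finset.sum_congr rfl fun a ha => ?_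
        rw [smul_smul, smul_smul, ← add_smul]
        congr 1
        rw [mul_div_cancel₀ _ h1t.ne']
        ring
    exact hface _ hrX ⟨u, huY, hrel⟩ (Finset.mem_coe.2 (Finsupp.mem_support_iff.2 hx))
  · intro h
    refine ⟨hYX, fun U hUX hne x₀ hx₀ => ?_⟩
    obtain ⟨u, huY, huU, hrel⟩ := hne
    have hx₀U : x₀ ∈ convF F U :=
      ⟨1, fun _ => 1, fun _ => x₀, fun _ => F.one_mem, fun _ => zero_le_one,
        fun _ => hx₀, by simp, by simp⟩
    obtain ⟨z, hz, t, htF, ht0, ht1, hu_eq⟩ := hrel x₀ hx₀U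
    obtain ⟨k, c, p, hcF, hc0, hpY, hcsum, hcu⟩ := huY
    obtain ⟨l, d, wv, hdF, hd0, hwU, hdsum, hdz⟩ := hz
    set C : Fin (l + 1) → ℝ := Fin.cons t (fun j => (1 - t) * d j) with hC_def
    set P : Fin (l + 1) → EuclideanSpace ℝ (Fin n) := Fin.cons x₀ wv with hP_def
    have hCF : ∀ j, C j ∈ F := by
      intro j
      refine Fin.cases ?_ ?_ j
      · simpa [hC_def] using htF
      · intro i
        simpa [hC_def] using mul_mem (sub_mem F.one_mem htF) (hdF i)
    have hC0 : ∀ j, 0 ≤ C j := by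
      intro j
      refine Fin.cases ?_ ?_ j
      · simpa [hC_def] using ht0.le
      · intro i
        simpa [hC_def] using mul_nonneg (by linarith : (0:ℝ) ≤ 1 - t) (hd0 i)
    have hPX : ∀ j, P j ∈ X := by
      intro j
      refine Fin.cases ?_ ?_ j
      · simpa [hP_def] using hUX hx₀
      · intro i
        simpa [hP_def] using hUX (hwU i)
    have hCsum : ∑ j, C j = 1 := by
      rw [hC_def, Fin.sum_univ_succ]
      simp only [Fin.cons_zero, Fin.cons_succ]
      rw [← Finset.mul_sum, hdsum]
      ring
    have hCombo : ∑ j, C j • P j = u := by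
      rw [hC_def, hP_def, Fin.sum_univ_succ]
      simp only [Fin.cons_zero, Fin.cons_succ]
      rw [hu_eq, ← hdz, Finset.smul_sum]
      congr 1
      exact Finset.sum_congr rfl fun j _ => by rw [smul_smul]
    have hrx₀ : t ≤ (∑ j, Finsupp.single (P j) (C j)) x₀ := by
      rw [agg_apply]
      calc t = (if P 0 = x₀ then C 0 else 0) := by simp [hC_def, hP_def]
        _ ≤ ∑ j, (if P j = x₀ then C j else 0) := by
          refine Finset.single_le_sum
            (f := fun j : Fin (l + 1) => if P j = x₀ then C j else 0) ?_ (Finset.mem_univ 0)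
          intro j _
          by_cases hj : P j = x₀ <;> simp [hj, hC0 j]
    refine h (∑ j, Finsupp.single (p j) (c j)) (∑ j, Finsupp.single (P j) (C j))
      (agg_mem c p F hcF) (agg_nonneg c p hc0) (agg_mem C P F hCF) (agg_nonneg C P hC0)
      ?_ ?_ ?_ ?_ ?_ x₀ (ne_of_gt (lt_of_lt_of_le ht0 hrx₀))
    · intro a ha
      obtain ⟨j, rfl⟩ := agg_support c p a (Finsupp.mem_support_iff.1 (Finset.mem_coe.1 ha))
      exact hpY j
    · intro a ha
      obtain ⟨j, rfl⟩ := agg_support C P a (Finsupp.mem_support_iff.1 (Finset.mem_coe.1 ha))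
      exact hPX j
    · rw [agg_combo, agg_combo, hcu, hCombo]
    · rw [agg_total, agg_total, hcsum, hCsum]
    · rw [agg_total, hcsum]; norm_num
end
end

section
/- For any X ⊆ ℝⁿ and subfield F ⊆ ℝ, the positive weak F-faces of X are exactly the subsets Y ⊆ X such that Y is a weak F-face of X, Y is a weak F-face of X ∪ {0}, and 0 ∉ conv_F(Y). -/
open scoped BigOperators

noncomputable section

variable {n : ℕ}

/-- `Y` is a positive weak `F`-face of `X`. -/
def IsPosWeakFFace (F : Subfield ℝ) (X Y : Set (EuclideanSpace ℝ (Fin n))) : Prop :=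
  IsWeakFFace F X Y ∧ ∀ U ⊆ X, convF F Y ∩ relintF F (U ∪ {0}) = ∅

lemma mem_convF_self (F : Subfield ℝ) (X : Set (EuclideanSpace ℝ (Fin n)))
    {x : EuclideanSpace ℝ (Fin n)} (hx : x ∈ X) : x ∈ convF F X := by
  refine ⟨1, fun _ => 1, fun _ => x, fun _ => F.one_mem, fun _ => zero_le_one,
    fun _ => hx, by simp, by simp⟩

lemma convF_zero (F : Subfield ℝ) :
    convF F ({0} : Set (EuclideanSpace ℝ (Fin n))) = {0} := by
  apply Set.Subset.antisymm
  · rintro u ⟨k, r, x, _, _, hx, _, hsum⟩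
    have : ∀ j, x j = 0 := fun j => hx j
    simp only [Set.mem_singleton_iff]
    rw [← hsum]
    simp [this]
  · rintro u rfl
    exact mem_convF_self F _ rfl

lemma zero_mem_relintF_zero (F : Subfield ℝ) :
    (0 : EuclideanSpace ℝ (Fin n)) ∈ relintF F ({0} : Set (EuclideanSpace ℝ (Fin n))) := by
  have h0 : (0 : EuclideanSpace ℝ (Fin n)) ∈ convF F ({0} : Set (EuclideanSpace ℝ (Fin n))) :=
    mem_convF_self F _ rfl
  refine ⟨h0, fun y hy => ?_⟩
  rw [convF_zero] at hy
  subst hy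
  refine ⟨0, h0, 1/2, ?_, by norm_num, by norm_num, by simp⟩
  exact F.div_mem F.one_mem (by exact_mod_cast F.add_mem F.one_mem F.one_mem)

theorem posWeakFFace_iff (F : Subfield ℝ)
    (X Y : Set (EuclideanSpace ℝ (Fin n))) (hYX : Y ⊆ X) :
    IsPosWeakFFace F X Y ↔
      IsWeakFFace F X Y ∧ IsWeakFFace F (X ∪ {0}) Y ∧ (0 : EuclideanSpace ℝ (Fin n)) ∉ convF F Y := by
  constructor
  · rintro ⟨hface, hpos⟩
    refine ⟨hface, ⟨hYX.trans Set.subset_union_left, ?_⟩, ?_⟩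
    · intro U hU hne
      by_cases h0 : (0 : EuclideanSpace ℝ (Fin n)) ∈ U
      · exfalso
        have hU' : U \ {0} ⊆ X := by
          intro u hu
          rcases hU hu.1 with h | h
          · exact h
          · exact absurd h hu.2
        have := hpos (U \ {0}) hU'
        have heq : (U \ {0}) ∪ {0} = U := by
          rw [Set.diff_union_self]
          exact Set.union_eq_self_of_subset_right (Set.singleton_subset_iff.2 h0)
        rw [heq] at this
        rw [this] at hne
        exact Set.not_nonempty_empty hne
      · have hUX : U ⊆ X := by
          intro u hu
          rcases hU hu with h | h
          · exact h
          · exact absurd (h ▸ hu) h0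
        exact hface.2 U hUX hne
    · intro hzero
      have h1 := hpos ∅ (Set.empty_subset X)
      rw [Set.empty_union] at h1
      have h2 : (0 : EuclideanSpace ℝ (Fin n)) ∈ convF F Y ∩ relintF F ({0} : Set (EuclideanSpace ℝ (Fin n))) :=
        ⟨hzero, zero_mem_relintF_zero F⟩
      rw [h1] at h2
      exact h2
  · rintro ⟨hface, hface0, hzero⟩
    refine ⟨hface, fun U hU => ?_⟩
    rw [Set.eq_empty_iff_forall_notMem]
    rintro u ⟨hu1, hu2⟩
    have hsub : U ∪ {0} ⊆ X ∪ {0} := Set.union_subset_union_left _ hU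
    have := hface0.2 (U ∪ {0}) hsub ⟨u, hu1, hu2⟩
    have h0Y : (0 : EuclideanSpace ℝ (Fin n)) ∈ Y := this (Or.inr rfl)
    exact hzero (mem_convF_self F Y h0Y)
end
end
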